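/- Consider the queue machine with states q and q_F and transitions (q,b,a,q), (q,a,ab,q), (q,A,Ab,q), (q,A,AA,q_F), started with initial tape contents 'A'. In any halting computation of this machine, the total number of symbols on the tape at the end is a Fibonacci number; conversely, for every Fibonacci number F ≥ some minimal value there is a halting computation ending with exactly F symbols. Moreover, in the final tape string, the occurrences of the symbol A (apart from the last one) occur exactly at positions F_k − 1 for Fibonacci numbers F_k. -/

import Mathlib

/-!
The machine runs the morphism `φ : A ↦ Ab, a ↦ ab, b ↦ a` as a queue:
starting from `A`, the queue passes through the blocks `φ⁰(A), φ¹(A), φ²(A), …`, each block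
being read and replaced by the next one. Every block starts with `A` and contains no other `A`,
so the machine can halt only when it starts reading a block, and the tape is then
`φ⁰(A) ⋯ φʲ(A)` followed by `AA`. Since `|φ(w)|` is `|w|` plus the number of letters of `w`
other than `b`, and each `φ(x)` has exactly one letter other than `b`, the block lengths satisfy
the Fibonacci recurrence; so the blocks start at the positions `F - 2` for Fibonacci `F ≥ 2`.
-/

/-- The tape alphabet of the example queue machine. -/
inductive QSym : Type
  | a : QSym
  | b : QSym
  | A : QSym
deriving DecidableEq

/-- Configurations are pairs (r, w) where w is the full tape contents (nothing is
ever erased) and r is the position of the read head; the current queue is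
`w.drop r`.  Non-halting steps in state q: b ↦ a, a ↦ ab, A ↦ Ab. -/
inductive QStep : ℕ × List QSym → ℕ × List QSym → Prop
  | readb (r : ℕ) (w t : List QSym) :
      w.drop r = QSym.b :: t → QStep (r, w) (r + 1, w ++ [QSym.a])
  | reada (r : ℕ) (w t : List QSym) :
      w.drop r = QSym.a :: t → QStep (r, w) (r + 1, w ++ [QSym.a, QSym.b])
  | readA (r : ℕ) (w t : List QSym) :
      w.drop r = QSym.A :: t → QStep (r, w) (r + 1, w ++ [QSym.A, QSym.b])

/-- Configurations reachable from the initial configuration (tape `A`, read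
head at position 0) without entering the final state. -/
def QReaches (c : ℕ × List QSym) : Prop :=
  Relation.ReflTransGen QStep (0, [QSym.A]) c

/-- `s` is the final tape of some halting computation of the machine: from a
reachable configuration whose queue starts with A, the halting transition
(q, A, AA, q_F) is taken. -/
def FinalTape (s : List QSym) : Prop :=
  ∃ (r : ℕ) (w t : List QSym), QReaches (r, w) ∧ w.drop r = QSym.A :: t ∧
    s = w ++ [QSym.A, QSym.A]

namespace QueueMachine

def fibMorph : QSym → List QSym
  | .a => [.a, .b]
  | .b => [.a]
  | .A => [.A, .b]

def fibSubst (l : List QSym) : List QSym := l.flatMap fibMorph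

@[simp] lemma fibSubst_nil : fibSubst [] = [] := rfl

@[simp] lemma fibSubst_cons (x : QSym) (l : List QSym) :
    fibSubst (x :: l) = fibMorph x ++ fibSubst l := rfl

@[simp] lemma fibSubst_append (l₁ l₂ : List QSym) :
    fibSubst (l₁ ++ l₂) = fibSubst l₁ ++ fibSubst l₂ := List.flatMap_append

lemma A_mem_fibSubst_iff (l : List QSym) : .A ∈ fibSubst l ↔ .A ∈ l := by
  induction l with
  | nil => simp
  | cons x l ih => cases x <;> simp [fibMorph, ih]

lemma length_fibSubst (l : List QSym) :
    (fibSubst l).length = l.length + l.countP (· != .b) := by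
  induction l with
  | nil => rfl
  | cons x l ih => cases x <;> simp [fibMorph, ih] <;> omega

lemma countP_ne_b_fibSubst (l : List QSym) : (fibSubst l).countP (· != .b) = l.length := by
  induction l with
  | nil => rfl
  | cons x l ih => cases x <;> simp [fibMorph, ih]

lemma length_fibSubst_fibSubst (l : List QSym) :
    (fibSubst (fibSubst l)).length = (fibSubst l).length + l.length := by
  rw [length_fibSubst (fibSubst l), countP_ne_b_fibSubst]

def block : ℕ → List QSym
  | 0 => [.A]
  | k + 1 => fibSubst (block k)

lemma length_block (k : ℕ) : (block k).length = Nat.fib (k + 2) := by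
  induction k using Nat.twoStepInduction with
  | zero => rfl
  | one => rfl
  | more k ih₀ ih₁ =>
    rw [Nat.fib_add_two, ← ih₀, ← ih₁]
    exact (length_fibSubst_fibSubst (block k)).trans (add_comm _ _)

lemma exists_block_eq_A_cons (k : ℕ) : ∃ e, block k = .A :: e ∧ .A ∉ e := by
  induction k with
  | zero => exact ⟨[], rfl, by simp⟩
  | succ k ih =>
    obtain ⟨e, he, hA⟩ := ih
    exact ⟨.b :: fibSubst e, by simp [block, he, fibMorph], by simpa [A_mem_fibSubst_iff]⟩

def blocks (k : ℕ) : List QSym := (List.range k).flatMap block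

@[simp] lemma blocks_zero : blocks 0 = [] := rfl

lemma blocks_succ (k : ℕ) : blocks (k + 1) = blocks k ++ block k := by
  simp [blocks, List.range_succ]

lemma length_blocks_add_two (k : ℕ) : (blocks k).length + 2 = Nat.fib (k + 3) := by
  induction k with
  | zero => rfl
  | succ k ih =>
    rw [blocks_succ, List.length_append, length_block, add_right_comm, ih,
      Nat.fib_add_two (n := k + 2), add_comm]

lemma getElem?_append_cons_eq_some_iff {α : Type*} {l₁ l₂ : List α} {x : α} (hx : x ∉ l₂)
    (i : ℕ) : (l₁ ++ x :: l₂)[i]? = some x ↔ l₁[i]? = some x ∨ i = l₁.length := by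
  rcases lt_trichotomy i l₁.length with hi | rfl | hi
  · simp [List.getElem?_append_left hi, hi.ne]
  · simp
  · obtain ⟨n, rfl⟩ := Nat.exists_eq_add_of_lt hi
    rw [List.getElem?_append_right hi.le, List.getElem?_eq_none hi.le,
      show l₁.length + n + 1 - l₁.length = n + 1 by omega, List.getElem?_cons_succ]
    simp only [reduceCtorEq, false_or, iff_false, show l₁.length + n + 1 ≠ l₁.length by omega]
    exact fun h : l₂[n]? = some x => hx (List.mem_of_getElem? h)

lemma getElem?_blocks_eq_some_A_iff (k i : ℕ) :
    (blocks k)[i]? = some .A ↔ ∃ m < k, i = (blocks m).length := by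
  induction k with
  | zero => simp
  | succ k ih =>
    obtain ⟨e, he, hA⟩ := exists_block_eq_A_cons k
    rw [blocks_succ, he, getElem?_append_cons_eq_some_iff hA, ih, Nat.exists_lt_succ_right]

lemma qStep_iff {r : ℕ} {w : List QSym} {c : ℕ × List QSym} :
    QStep (r, w) c ↔ ∃ x t, w.drop r = x :: t ∧ c = (r + 1, w ++ fibMorph x) := by
  constructor
  · rintro (⟨_, _, t, h⟩ | ⟨_, _, t, h⟩ | ⟨_, _, t, h⟩) <;> exact ⟨_, t, h, rfl⟩
  · rintro ⟨x, t, h, rfl⟩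
    cases x
    · exact QStep.reada r w t h
    · exact QStep.readb r w t h
    · exact QStep.readA r w t h

lemma reflTransGen_qStep_consume (pre q z : List QSym) :
    Relation.ReflTransGen QStep (pre.length, pre ++ q ++ z)
      (pre.length + q.length, pre ++ q ++ z ++ fibSubst q) := by
  induction q generalizing pre z with
  | nil => simpa using Relation.ReflTransGen.refl
  | cons x q ih =>
    have hstep : QStep (pre.length, pre ++ x :: q ++ z)
        ((pre ++ [x]).length, (pre ++ [x]) ++ q ++ (z ++ fibMorph x)) :=
      qStep_iff.2 ⟨x, q ++ z, by simp, by simp⟩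
    convert Relation.ReflTransGen.head hstep (ih (pre ++ [x]) (z ++ fibMorph x)) using 2 <;>
      simp +arith

lemma qReaches_blocks (j : ℕ) : QReaches ((blocks j).length, blocks (j + 1)) := by
  induction j with
  | zero => exact Relation.ReflTransGen.refl
  | succ j ih =>
    have h := reflTransGen_qStep_consume (blocks j) (block j) []
    rw [List.append_nil, ← blocks_succ, ← List.length_append, ← blocks_succ] at h
    rw [blocks_succ (j + 1)]
    exact ih.trans h

lemma drop_blocks_succ_append_fibSubst {j : ℕ} {u v : List QSym} (huv : u ++ v = block j) :
    (blocks (j + 1) ++ fibSubst u).drop (blocks j ++ u).length = v ++ fibSubst u := by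
  rw [blocks_succ, ← huv, ← List.append_assoc, List.append_assoc, List.drop_left]

/-- Invariant of the run: a prefix `u` of the `j`-th block has been read and its image
appended to the tape. -/
def ReadingBlock (c : ℕ × List QSym) : Prop :=
  ∃ j u v, u ++ v = block j ∧ v ≠ [] ∧
    c = ((blocks j ++ u).length, blocks (j + 1) ++ fibSubst u)

lemma ReadingBlock.of_qStep {c c' : ℕ × List QSym} (hc : ReadingBlock c) (h : QStep c c') :
    ReadingBlock c' := by
  obtain ⟨j, u, v, huv, hv, rfl⟩ := hc
  obtain ⟨x, t, hx, rfl⟩ := qStep_iff.1 h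
  obtain ⟨y, v, rfl⟩ := List.exists_cons_of_ne_nil hv
  rw [drop_blocks_succ_append_fibSubst huv] at hx
  obtain rfl : y = x := (List.cons.inj hx).1
  rcases eq_or_ne v [] with rfl | hv'
  · refine ⟨j + 1, [], block (j + 1), by simp, ?_, ?_⟩
    · obtain ⟨e, he, -⟩ := exists_block_eq_A_cons (j + 1)
      simp [he]
    · rw [blocks_succ (j + 1), blocks_succ j, block, ← huv]
      simp [add_assoc]
  · refine ⟨j, u ++ [y], v, by simpa using huv, hv', ?_⟩
    rw [blocks_succ, ← huv]
    simp [add_assoc]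

lemma ReadingBlock.of_qReaches {c : ℕ × List QSym} (h : QReaches c) : ReadingBlock c := by
  induction h with
  | refl => exact ⟨0, [], [.A], rfl, by simp, rfl⟩
  | tail _ hstep ih => exact ih.of_qStep hstep

lemma finalTape_iff {s : List QSym} :
    FinalTape s ↔ ∃ j, s = blocks (j + 1) ++ [QSym.A, QSym.A] := by
  constructor
  · rintro ⟨r, w, t, hreach, hA, rfl⟩
    obtain ⟨j, u, v, huv, hv, hc⟩ := ReadingBlock.of_qReaches hreach
    obtain ⟨rfl, rfl⟩ := Prod.mk.inj hc
    obtain ⟨y, v, rfl⟩ := List.exists_cons_of_ne_nil hv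
    rw [drop_blocks_succ_append_fibSubst huv] at hA
    obtain rfl : y = .A := (List.cons.inj hA).1
    rcases u with _ | ⟨x, u⟩
    · exact ⟨j, by simp⟩
    · obtain ⟨e, he, hAe⟩ := exists_block_eq_A_cons j
      rw [← huv, List.cons_append, List.cons.injEq] at he
      exact absurd (he.2 ▸ by simp) hAe
  · rintro ⟨j, rfl⟩
    obtain ⟨e, he, -⟩ := exists_block_eq_A_cons j
    exact ⟨_, _, e, qReaches_blocks j, by rw [blocks_succ, List.drop_left, he], rfl⟩

lemma length_blocks_succ_append_A_A (j : ℕ) :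
    (blocks (j + 1) ++ [QSym.A, QSym.A]).length = Nat.fib (j + 4) := by
  simpa using length_blocks_add_two (j + 1)

lemma getElem_blocks_succ_append_A_A_eq_A_iff (j i : ℕ)
    (hi : i < (blocks (j + 1) ++ [QSym.A, QSym.A]).length) :
    ((blocks (j + 1) ++ [QSym.A, QSym.A])[i] = .A ∧
        i + 1 < (blocks (j + 1) ++ [QSym.A, QSym.A]).length) ↔
      ∃ m < j + 2, i = (blocks m).length := by
  rw [Nat.exists_lt_succ_right, ← getElem?_blocks_eq_some_A_iff,
    ← getElem?_append_cons_eq_some_iff List.not_mem_nil]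
  simp only [List.length_append, List.length_cons, List.length_nil] at hi ⊢
  rcases lt_trichotomy i (blocks (j + 1)).length with hi' | rfl | hi'
  · simp [List.getElem_append_left hi', hi'.le]
  · simp
  · simp [show i = (blocks (j + 1)).length + 1 by omega]

lemma exists_length_blocks_eq_iff {i j : ℕ} (hi : i < Nat.fib (j + 4)) :
    (∃ m < j + 2, i = (blocks m).length) ↔ ∃ k, i + 2 = Nat.fib (k + 3) := by
  constructor
  · rintro ⟨m, -, rfl⟩
    exact ⟨m, length_blocks_add_two m⟩
  · rintro ⟨m, hm⟩
    have hfib : Nat.fib (j + 4) + 2 ≤ Nat.fib (j + 5) := by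
      have : 2 ≤ Nat.fib (j + 3) := (by decide : 2 ≤ Nat.fib 3).trans (Nat.fib_mono (by omega))
      rw [Nat.fib_add_two (n := j + 3)]
      change _ ≤ Nat.fib (j + 3) + Nat.fib (j + 4)
      omega
    have hm' : m + 3 < j + 5 := (Nat.fib_lt_fib (by omega)).1 (by omega)
    exact ⟨m, by omega, by have := length_blocks_add_two m; omega⟩

end QueueMachine

open QueueMachine in
/-- in any halting computation the final number of tape symbols
is a Fibonacci number (convention 1, 2, 3, 5, 8, …, i.e. `Nat.fib (k+2)`);
conversely every large enough Fibonacci number is so obtained; and in the final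
tape string the occurrences of A, apart from the last, are exactly at
(1-indexed) positions F − 1 for Fibonacci numbers F ≥ 2. -/
theorem stmt_16 :
    (∀ s : List QSym, FinalTape s → ∃ k : ℕ, s.length = Nat.fib (k + 2)) ∧
    (∃ F₀ : ℕ, ∀ F : ℕ, F₀ ≤ F → (∃ k : ℕ, F = Nat.fib (k + 2)) →
      ∃ s : List QSym, FinalTape s ∧ s.length = F) ∧
    (∀ s : List QSym, FinalTape s → ∀ (i : ℕ) (h : i < s.length),
      (s.get ⟨i, h⟩ = QSym.A ∧ i + 1 < s.length) ↔
        ∃ k : ℕ, i + 2 = Nat.fib (k + 3)) := by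
  refine ⟨?_, ⟨3, ?_⟩, ?_⟩
  · intro s hs
    obtain ⟨j, rfl⟩ := finalTape_iff.1 hs
    exact ⟨j + 2, length_blocks_succ_append_A_A j⟩
  · rintro F hF ⟨k, rfl⟩
    have hk : 3 < k + 2 := (Nat.fib_lt_fib (by norm_num)).1 (lt_of_lt_of_le (by decide) hF)
    obtain ⟨j, rfl⟩ : ∃ j, k = j + 2 := ⟨k - 2, by omega⟩
    exact ⟨_, finalTape_iff.2 ⟨j, rfl⟩, length_blocks_succ_append_A_A j⟩
  · intro s hs i hi
    obtain ⟨j, rfl⟩ := finalTape_iff.1 hs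
    rw [List.get_eq_getElem, getElem_blocks_succ_append_A_A_eq_A_iff j i hi,
      exists_length_blocks_eq_iff (length_blocks_succ_append_A_A j ▸ hi)]
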